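/- Let N ≥ 1, let S ⊆ ℝ^N be compact, let h ∈ B_S, and let D ⊆ ℝ^N be a bounded measurable set with nonempty interior. Define the sequence f_0 = P_S(χ_D h) and f_{k+1} = T_h^{(D)} f_k for k ≥ 0. Then the norms of the iterates converge to the norm of h: lim_{k→∞} ‖f_k‖ = ‖h‖. -/

import Mathlib

open MeasureTheory FourierTransform Filter

noncomputable section

/-- The Hilbert space `L²(ℝᴺ; ℂ)` of square-integrable functions on `ℝᴺ`. -/
abbrev L2Space (N : ℕ) : Type :=
  Lp ℂ 2 (volume : Measure (EuclideanSpace ℝ (Fin N)))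

/-- `f ∈ L²(ℝᴺ)` is bandlimited to `S`: its Fourier transform vanishes (a.e.) outside `S`;
equivalently, `f` agrees a.e. with the inverse Fourier transform of an integrable function `F`
vanishing outside `S`. -/
def IsBandlimited {N : ℕ} (S : Set (EuclideanSpace ℝ (Fin N))) (f : L2Space N) : Prop :=
  ∃ F : EuclideanSpace ℝ (Fin N) → ℂ,
    Integrable F ∧ (∀ k, k ∉ S → F k = 0) ∧
      (f : EuclideanSpace ℝ (Fin N) → ℂ) =ᵐ[volume] 𝓕⁻ F

/-- Multiplication of `f ∈ L²` by the indicator function `χ_D`, as an element of `L²`. -/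
def chiMul {N : ℕ} {D : Set (EuclideanSpace ℝ (Fin N))} (hD : MeasurableSet D)
    (f : L2Space N) : L2Space N :=
  ((Lp.memLp f).indicator hD).toLp (D.indicator f)

/-- The orthogonal projection of `L²(ℝᴺ)` onto a closed subspace `K`. -/
def projOf {N : ℕ} (K : Submodule ℂ (L2Space N)) (hK : IsClosed (K : Set (L2Space N))) :
    L2Space N → L2Space N :=
  haveI : CompleteSpace K := hK.completeSpace_coe
  fun f => (K.orthogonalProjectionOnto f : L2Space N)

/-- The operator `T_h^{(D)} f = P_S (f + χ_D (h − f))` (single region). -/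
def Tsingle {N : ℕ} (K : Submodule ℂ (L2Space N)) (hK : IsClosed (K : Set (L2Space N)))
    {D : Set (EuclideanSpace ℝ (Fin N))} (hD : MeasurableSet D)
    (h f : L2Space N) : L2Space N :=
  projOf K hK (f + chiMul hD (h - f))

/-!
The error `e_k = h - f_k` evolves by `e_{k+1} = A e_k` with `A = P_S (1 - χ_D) P_S`, a positive
contraction. The iterates of a positive contraction converge to a fixed point `u` of `A`, and
`A u = u` forces `u ∈ B_S` and `χ_D u = 0`. A bandlimited function is the restriction of an entire
function along every line, so vanishing on the open set `interior D` makes `u = 0`; hence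
`f_k → h`.
-/

open scoped Topology

namespace LinearMap.IsSymmetric

variable {𝕜 E : Type*} [RCLike 𝕜] [NormedAddCommGroup E] [InnerProductSpace 𝕜 E]
  {T : E →ₗ[𝕜] E}

theorem inner_iterate_apply_iterate_apply (hT : T.IsSymmetric) (x : E) (k m : ℕ) :
    inner 𝕜 (T^[k] x) (T^[m] x) = inner 𝕜 x (T^[k + m] x) := by
  induction k generalizing m with
  | zero => simp
  | succ k ih =>
    rw [Function.iterate_succ_apply', hT, ← Function.iterate_succ_apply' T, ih,
      Nat.add_right_comm, Nat.add_assoc]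

theorem norm_iterate_apply_sub_iterate_apply_sq (hT : T.IsSymmetric) (x : E) {k m p : ℕ}
    (hkm : k + m = p + p) :
    ‖T^[k] x - T^[m] x‖ ^ 2 = ‖T^[k] x‖ ^ 2 + ‖T^[m] x‖ ^ 2 - 2 * ‖T^[p] x‖ ^ 2 := by
  have hinner : RCLike.re (inner 𝕜 (T^[k] x) (T^[m] x)) = ‖T^[p] x‖ ^ 2 := by
    rw [hT.inner_iterate_apply_iterate_apply, hkm, ← hT.inner_iterate_apply_iterate_apply,
      inner_self_eq_norm_sq]
  rw [@norm_sub_sq 𝕜, hinner]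
  ring

/-- For a symmetric contraction the squared norms `‖T^[n] x‖²` decrease to some `c`, and
`‖T^[2m] x - T^[2n] x‖² = ‖T^[2m] x‖² + ‖T^[2n] x‖² - 2 ‖T^[m+n] x‖²` is then squeezed to `0`. -/
theorem cauchySeq_iterate_two_mul_apply (hT : T.IsSymmetric) (hT1 : ∀ y, ‖T y‖ ≤ ‖y‖)
    (x : E) : CauchySeq fun n => T^[2 * n] x := by
  set b : ℕ → ℝ := fun n => ‖T^[n] x‖ ^ 2
  have hb : Antitone b := antitone_nat_of_succ_le fun n => by
    simp only [b, Function.iterate_succ_apply']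
    gcongr
    exact hT1 _
  have hc := tendsto_atTop_ciInf hb ⟨0, by rintro _ ⟨n, rfl⟩; positivity⟩
  set c := ⨅ n, b n
  have hlim : Tendsto (fun n => √(2 * (b (2 * n) - c))) atTop (𝓝 0) := by
    have := (hc.comp (tendsto_id.const_mul_atTop' two_pos)).sub_const c
    simpa only [Function.comp_apply, id_eq, sub_self, mul_zero, Real.sqrt_zero]
      using (this.const_mul 2).sqrt
  refine cauchySeq_of_le_tendsto_0 _ (fun m n M hm hn => ?_) hlim
  rw [dist_eq_norm, Real.le_sqrt (norm_nonneg _) (by linarith [hb.le_of_tendsto hc (2 * M)]),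
    hT.norm_iterate_apply_sub_iterate_apply_sq x (p := m + n) (by ring)]
  linarith [hb (by omega : 2 * M ≤ 2 * m), hb (by omega : 2 * M ≤ 2 * n),
    hb.le_of_tendsto hc (m + n)]

end LinearMap.IsSymmetric

namespace ContinuousLinearMap.IsPositive

variable {𝕜 E : Type*} [RCLike 𝕜] [NormedAddCommGroup E] [InnerProductSpace 𝕜 E]
  {T : E →L[𝕜] E}

theorem eq_zero_of_apply_eq_neg (hT : T.IsPositive) {q : E} (hq : T q = -q) : q = 0 := by
  have := hT.re_inner_nonneg_left q
  rw [hq, inner_neg_left, map_neg, inner_self_eq_norm_sq] at this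
  exact norm_eq_zero.1 (by nlinarith [norm_nonneg q])

theorem apply_eq_of_apply_apply_eq (hT : T.IsPositive) {u : E} (hu : T (T u) = u) : T u = u :=
  sub_eq_zero.1 <| hT.eq_zero_of_apply_eq_neg <| by rw [map_sub, hu, neg_sub]

/-- The even iterates converge by the symmetric-contraction estimate; positivity turns the
two-periodic limit into a fixed point `u`, and `‖T^[n] x - u‖` is antitone. -/
theorem exists_tendsto_iterate_apply [CompleteSpace E] (hT : T.IsPositive) (hT1 : ‖T‖ ≤ 1)
    (x : E) : ∃ u, T u = u ∧ Tendsto (fun n => T^[n] x) atTop (𝓝 u) := by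
  have hT1' (y : E) : ‖T y‖ ≤ ‖y‖ := T.le_of_opNorm_le hT1 y |>.trans_eq (one_mul _)
  obtain ⟨u, hu⟩ := cauchySeq_tendsto_of_complete
    (hT.isSymmetric.cauchySeq_iterate_two_mul_apply hT1' x)
  have hTTu : T (T u) = u := by
    refine tendsto_nhds_unique (f := fun n => T^[2 * (n + 1)] x) ?_
      (hu.comp (tendsto_add_atTop_nat 1))
    have := ((T.continuous.comp T.continuous).tendsto u).comp hu
    refine this.congr fun n => ?_
    simp only [Function.comp_apply, ContinuousLinearMap.coe_coe,
      show 2 * (n + 1) = 2 * n + 1 + 1 by ring, Function.iterate_succ_apply']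
  have hTu := hT.apply_eq_of_apply_apply_eq hTTu
  refine ⟨u, hTu, tendsto_iff_norm_sub_tendsto_zero.2 ?_⟩
  have hanti : Antitone fun n => ‖T^[n] x - u‖ := antitone_nat_of_succ_le fun n => by
    conv_lhs => rw [Function.iterate_succ_apply', ← hTu, ← map_sub]
    exact hT1' _
  rw [tendsto_iff_tendsto_subseq_of_antitone hanti (tendsto_id.const_mul_atTop' two_pos)]
  exact tendsto_iff_norm_sub_tendsto_zero.1 hu

end ContinuousLinearMap.IsPositive

theorem Submodule.mem_inf_of_starProjection_starProjection_apply_eq {𝕜 E : Type*} [RCLike 𝕜]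
    [NormedAddCommGroup E] [InnerProductSpace 𝕜 E] {U V : Submodule 𝕜 E}
    [U.HasOrthogonalProjection] [V.HasOrthogonalProjection] {u : E}
    (h : U.starProjection (V.starProjection u) = u) : u ∈ U ⊓ V := by
  refine ⟨h ▸ U.starProjection_apply_mem _, (V.mem_iff_norm_starProjection u).2 ?_⟩
  refine le_antisymm (V.norm_starProjection_apply_le u) ?_
  calc ‖u‖ = ‖U.starProjection (V.starProjection u)‖ := by rw [h]
    _ ≤ ‖V.starProjection u‖ := U.norm_starProjection_apply_le _

section Analytic

open Complex
open scoped RealInnerProductSpace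

theorem norm_cexp_mul_mul_le {w L G : ℂ} {r C : ℝ} (hw : ‖w‖ ≤ r) (hLC : G ≠ 0 → ‖L‖ ≤ C) :
    ‖cexp (w * L) * G‖ ≤ Real.exp (r * C) * ‖G‖ := by
  rcases eq_or_ne G 0 with hG | hG
  · simp [hG]
  rw [norm_mul]
  gcongr
  calc ‖cexp (w * L)‖ ≤ Real.exp ‖w * L‖ := norm_exp_le_exp_norm _
    _ ≤ Real.exp (r * C) := by
      rw [norm_mul]
      gcongr
      · exact (norm_nonneg w).trans hw
      · exact hLC hG

/-- Differentiation under the integral sign: `L` is bounded where `G` lives, so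
`|∂_w (e^{w L} G)| ≤ C e^{(‖w₀‖ + 1) C} |G|` near `w₀`. -/
theorem differentiable_integral_cexp_mul_mul {α : Type*} [MeasurableSpace α] {μ : Measure α}
    {L G : α → ℂ} (hG : Integrable G μ) (hL : AEStronglyMeasurable L μ) {C : ℝ}
    (hLC : ∀ ξ, G ξ ≠ 0 → ‖L ξ‖ ≤ C) :
    Differentiable ℂ fun w => ∫ ξ, cexp (w * L ξ) * G ξ ∂μ := by
  intro w₀
  have hmeas (w : ℂ) : AEStronglyMeasurable (fun ξ => cexp (w * L ξ) * G ξ) μ :=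
    (continuous_exp.comp_aestronglyMeasurable (hL.const_mul w)).mul hG.1
  have hint : Integrable (fun ξ => cexp (w₀ * L ξ) * G ξ) μ :=
    (hG.norm.const_mul (Real.exp (‖w₀‖ * C))).mono' (hmeas w₀)
      (Eventually.of_forall fun ξ => norm_cexp_mul_mul_le le_rfl (hLC ξ))
  refine (hasDerivAt_integral_of_dominated_loc_of_deriv_le
    (F' := fun w ξ => L ξ * (cexp (w * L ξ) * G ξ))
    (bound := fun ξ => C * (Real.exp ((‖w₀‖ + 1) * C) * ‖G ξ‖))
    (Metric.ball_mem_nhds w₀ one_pos) (Eventually.of_forall hmeas) hint (hL.mul (hmeas w₀))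
    ?_ ((hG.norm.const_mul _).const_mul C) ?_).2.differentiableAt
  · refine Eventually.of_forall fun ξ w hw => ?_
    rcases eq_or_ne (G ξ) 0 with hG0 | hG0
    · simp [hG0]
    have hw' : ‖w‖ ≤ ‖w₀‖ + 1 := by
      linarith [norm_le_norm_add_norm_sub' w w₀, (mem_ball_iff_norm.1 hw).le]
    rw [norm_mul]
    exact mul_le_mul (hLC ξ hG0) (norm_cexp_mul_mul_le hw' (hLC ξ)) (norm_nonneg _)
      ((norm_nonneg _).trans (hLC ξ hG0))
  · refine Eventually.of_forall fun ξ w _ => ?_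
    refine ((((hasDerivAt_id' w).mul_const (L ξ)).cexp).mul_const (G ξ)).congr_deriv ?_
    ring

theorem fourierInv_eq_zero_of_eqOn_zero {V : Type*} [NormedAddCommGroup V]
    [InnerProductSpace ℝ V] [MeasurableSpace V] [BorelSpace V] [FiniteDimensional ℝ V]
    {F : V → ℂ} (hF : Integrable F) (hsupp : Bornology.IsBounded (Function.support F))
    {U : Set V} (hU : IsOpen U) (hUne : U.Nonempty) (h0 : Set.EqOn (𝓕⁻ F) 0 U) :
    𝓕⁻ F = 0 := by
  obtain ⟨x₀, hx₀⟩ := hUne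
  obtain ⟨R, hR⟩ := hsupp.subset_closedBall 0
  funext z
  set v := z - x₀
  -- `Φ` is the holomorphic extension of `t ↦ 𝓕⁻ F (x₀ + t • v)` to `ℂ`
  set Φ : ℂ → ℂ := fun w =>
    ∫ ξ, cexp (w * (↑(2 * Real.pi * ⟪ξ, v⟫) * I)) * (cexp (↑(2 * Real.pi * ⟪ξ, x₀⟫) * I) * F ξ)
  have hΦ (t : ℝ) : Φ t = 𝓕⁻ F (x₀ + t • v) := by
    rw [Real.fourierInv_eq']
    refine integral_congr_ae (Eventually.of_forall fun ξ => ?_)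
    simp only [smul_eq_mul, ← mul_assoc, ← Complex.exp_add, inner_add_right, inner_smul_right]
    push_cast
    ring_nf
  have hΦdiff : Differentiable ℂ Φ := by
    refine differentiable_integral_cexp_mul_mul (C := 2 * Real.pi * (R * ‖v‖)) ?_ ?_ fun ξ hξ => ?_
    · refine hF.bdd_mul (c := 1) (by fun_prop) (Eventually.of_forall fun ξ => ?_)
      rw [Complex.norm_exp_ofReal_mul_I]
    · fun_prop
    · have hξR : ‖ξ‖ ≤ R := by
        simpa using hR (Function.mem_support.2 (right_ne_zero_of_mul hξ))
      rw [norm_mul, Complex.norm_I, mul_one, Complex.norm_real, Real.norm_eq_abs, abs_mul,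
        abs_of_pos Real.two_pi_pos]
      gcongr
      exact (abs_real_inner_le_norm ξ v).trans (by gcongr)
  have hzero : ∀ᶠ t : ℝ in 𝓝 0, Φ t = 0 := by
    have : Tendsto (fun t : ℝ => x₀ + t • v) (𝓝 0) (𝓝 x₀) := by
      simpa using ((continuous_id.smul continuous_const).const_add x₀).tendsto (0 : ℝ)
    filter_upwards [this.eventually_mem (hU.mem_nhds hx₀)] with t ht
    rw [hΦ]
    exact h0 ht
  have hfreq : ∃ᶠ w in 𝓝[≠] (0 : ℂ), Φ w = 0 := by
    have hofReal : Tendsto ((↑) : ℝ → ℂ) (𝓝[≠] 0) (𝓝[≠] 0) := by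
      simpa using continuous_ofReal.continuousWithinAt.tendsto_nhdsWithin
        (s := {(0 : ℝ)}ᶜ) (t := {(0 : ℂ)}ᶜ) (x := 0) fun t ht => by simpa using ht
    exact hofReal.frequently (hzero.filter_mono nhdsWithin_le_nhds).frequently
  have hanalytic : AnalyticOnNhd ℂ Φ Set.univ := fun w _ => hΦdiff.analyticAt w
  have hΦ1 := hanalytic.eqOn_zero_of_preconnected_of_frequently_eq_zero isPreconnected_univ
    (Set.mem_univ 0) hfreq (Set.mem_univ 1)
  rw [← ofReal_one, hΦ, one_smul, add_sub_cancel] at hΦ1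
  exact hΦ1

end Analytic

section chiMul

variable {N : ℕ} {D : Set (EuclideanSpace ℝ (Fin N))} (hD : MeasurableSet D)

theorem coeFn_chiMul (f : L2Space N) : chiMul hD f =ᵐ[volume] D.indicator f :=
  MemLp.coeFn_toLp _

theorem chiMul_add (f g : L2Space N) : chiMul hD (f + g) = chiMul hD f + chiMul hD g := by
  refine Lp.ext ?_
  filter_upwards [coeFn_chiMul hD (f + g), coeFn_chiMul hD f, coeFn_chiMul hD g,
    Lp.coeFn_add f g, Lp.coeFn_add (chiMul hD f) (chiMul hD g)] with x h1 h2 h3 h4 h5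
  rw [h1, h5, Pi.add_apply, h2, h3]
  by_cases hx : x ∈ D
  · simpa only [Set.indicator_of_mem hx, Pi.add_apply] using h4
  · simp [Set.indicator_of_notMem hx]

theorem chiMul_smul (c : ℂ) (f : L2Space N) : chiMul hD (c • f) = c • chiMul hD f := by
  refine Lp.ext ?_
  filter_upwards [coeFn_chiMul hD (c • f), coeFn_chiMul hD f, Lp.coeFn_smul c f,
    Lp.coeFn_smul c (chiMul hD f)] with x h1 h2 h3 h4
  rw [h1, h4, Pi.smul_apply, h2]
  by_cases hx : x ∈ D
  · simpa only [Set.indicator_of_mem hx, Pi.smul_apply] using h3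
  · simp [Set.indicator_of_notMem hx]

theorem norm_chiMul_le (f : L2Space N) : ‖chiMul hD f‖ ≤ ‖f‖ := by
  refine Lp.norm_le_norm_of_ae_le ?_
  filter_upwards [coeFn_chiMul hD f] with x hx
  rw [hx]
  exact norm_indicator_le_norm_self _ _

theorem chiMul_chiMul (f : L2Space N) : chiMul hD (chiMul hD f) = chiMul hD f := by
  refine Lp.ext ?_
  filter_upwards [coeFn_chiMul hD (chiMul hD f), coeFn_chiMul hD f] with x h1 h2
  rw [h1, h2]
  by_cases hx : x ∈ D <;> simp [hx, h2]

theorem inner_chiMul_left (f g : L2Space N) :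
    inner ℂ (chiMul hD f) g = inner ℂ f (chiMul hD g) := by
  simp only [MeasureTheory.L2.inner_def]
  refine integral_congr_ae ?_
  filter_upwards [coeFn_chiMul hD f, coeFn_chiMul hD g] with x h1 h2
  rw [h1, h2]
  by_cases hx : x ∈ D <;> simp [hx]

def chiMulCLM : L2Space N →L[ℂ] L2Space N :=
  LinearMap.mkContinuous ⟨⟨chiMul hD, chiMul_add hD⟩, chiMul_smul hD⟩ 1 fun f => by
    simpa using norm_chiMul_le hD f

@[simp]
theorem chiMulCLM_apply (f : L2Space N) : chiMulCLM hD f = chiMul hD f := rfl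

theorem isStarProjection_chiMulCLM : IsStarProjection (chiMulCLM hD) := by
  refine ⟨ContinuousLinearMap.ext fun f => chiMul_chiMul hD f, ?_⟩
  rw [ContinuousLinearMap.isSelfAdjoint_iff_isSymmetric]
  exact inner_chiMul_left hD

theorem ae_restrict_eq_zero_of_chiMul_eq_zero {u : L2Space N} (hu : chiMul hD u = 0) :
    u =ᵐ[volume.restrict D] 0 := by
  refine (ae_restrict_iff' hD).2 ?_
  filter_upwards [coeFn_chiMul hD u,
    Lp.coeFn_zero ℂ 2 (volume : Measure (EuclideanSpace ℝ (Fin N)))] with x hx hx0 hxD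
  rw [hu, hx0, Set.indicator_of_mem hxD] at hx
  exact hx.symm

end chiMul

section errorOp

variable {N : ℕ} {D : Set (EuclideanSpace ℝ (Fin N))} (hD : MeasurableSet D)
  (K : Submodule ℂ (L2Space N)) [K.HasOrthogonalProjection]

def errorOp : L2Space N →L[ℂ] L2Space N :=
  K.starProjection ∘L (1 - chiMulCLM hD) ∘L K.starProjection

theorem isPositive_errorOp : (errorOp hD K).IsPositive :=
  (ContinuousLinearMap.IsPositive.of_isStarProjection
    (isStarProjection_chiMulCLM hD).one_sub).conj_starProjection K

theorem norm_errorOp_le_one : ‖errorOp hD K‖ ≤ 1 := by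
  have hP := K.starProjection_norm_le
  have hM := (isStarProjection_chiMulCLM hD).one_sub.norm_le
  calc ‖errorOp hD K‖
      ≤ ‖K.starProjection‖ * (‖1 - chiMulCLM hD‖ * ‖K.starProjection‖) :=
        (ContinuousLinearMap.opNorm_comp_le _ _).trans
          (mul_le_mul_of_nonneg_left (ContinuousLinearMap.opNorm_comp_le _ _) (norm_nonneg _))
    _ ≤ 1 * (1 * 1) := by gcongr
    _ = 1 := by norm_num

theorem sub_Tsingle_eq_errorOp (hK : IsClosed (K : Set (L2Space N))) {h g : L2Space N}
    (hh : h ∈ K) (hg : g ∈ K) : h - Tsingle K hK hD h g = errorOp hD K (h - g) := by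
  have hP (x : L2Space N) : projOf K hK x = K.starProjection x := rfl
  have hhg := K.sub_mem hh hg
  rw [Tsingle, hP, errorOp, ContinuousLinearMap.comp_apply, ContinuousLinearMap.comp_apply,
    K.starProjection_eq_self_iff.2 hhg, sub_apply, one_apply_eq_self, chiMulCLM_apply, map_add,
    map_sub, K.starProjection_eq_self_iff.2 hg, K.starProjection_eq_self_iff.2 hhg]
  abel

theorem mem_and_chiMul_eq_zero_of_errorOp_apply_eq {u : L2Space N} (hu : errorOp hD K u = u) :
    u ∈ K ∧ chiMul hD u = 0 := by
  obtain ⟨V, _, hV⟩ :=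
    isStarProjection_iff_eq_starProjection.1 (isStarProjection_chiMulCLM hD).one_sub
  have huK : u ∈ K := hu ▸ K.starProjection_apply_mem _
  rw [errorOp, ContinuousLinearMap.comp_apply, ContinuousLinearMap.comp_apply,
    K.starProjection_eq_self_iff.2 huK, hV] at hu
  have huV : u ∈ V := (K.mem_inf_of_starProjection_starProjection_apply_eq hu).2
  rw [← V.starProjection_eq_self_iff, ← hV] at huV
  exact ⟨huK, by simpa using huV⟩

end errorOp

theorem IsBandlimited.eq_zero_of_ae_restrict_eq_zero {N : ℕ} {S : Set (EuclideanSpace ℝ (Fin N))}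
    (hS : IsCompact S) {u : L2Space N} (hu : IsBandlimited S u)
    {U : Set (EuclideanSpace ℝ (Fin N))} (hU : IsOpen U) (hUne : U.Nonempty)
    (h0 : u =ᵐ[volume.restrict U] 0) : u = 0 := by
  obtain ⟨F, hF, hFS, huF⟩ := hu
  have hcont : Continuous (𝓕⁻ F) :=
    VectorFourier.fourierIntegral_continuous Real.continuous_fourierChar
      (continuous_inner (𝕜 := ℝ) (E := EuclideanSpace ℝ (Fin N))).neg hF
  have hsupp : Bornology.IsBounded (Function.support F) :=
    hS.isBounded.subset fun ξ hξ => by_contra fun hξS => hξ (hFS ξ hξS)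
  have hFU : 𝓕⁻ F =ᵐ[volume.restrict U] 0 :=
    (huF.filter_mono (ae_mono Measure.restrict_le_self)).symm.trans h0
  have hF0 : 𝓕⁻ F = 0 := fourierInv_eq_zero_of_eqOn_zero hF hsupp hU hUne <|
    Measure.eqOn_open_of_ae_eq hFU hU hcont.continuousOn continuousOn_const
  refine Lp.ext ?_
  filter_upwards [huF, Lp.coeFn_zero ℂ 2 (volume : Measure (EuclideanSpace ℝ (Fin N)))]
    with x hx hx0
  rw [hx, hx0, hF0]

theorem iterates_norm_tendsto_single_general (N : ℕ)
    (S : Set (EuclideanSpace ℝ (Fin N))) (hS : IsCompact S)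
    (K : Submodule ℂ (L2Space N))
    (hKset : (K : Set (L2Space N)) = {f : L2Space N | IsBandlimited S f})
    (hK : IsClosed (K : Set (L2Space N)))
    (h : L2Space N) (hh : IsBandlimited S h)
    (D : Set (EuclideanSpace ℝ (Fin N))) (hD : MeasurableSet D)
    (hDint : (interior D).Nonempty)
    (f : ℕ → L2Space N) (hf0 : f 0 = projOf K hK (chiMul hD h))
    (hfrec : ∀ k : ℕ, f (k + 1) = Tsingle K hK hD h (f k)) :
    Tendsto (fun k => ‖f k‖) atTop (nhds ‖h‖) := by
  have : CompleteSpace K := hK.completeSpace_coe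
  have hmem (g : L2Space N) : g ∈ K ↔ IsBandlimited S g := by rw [← SetLike.mem_coe, hKset]; rfl
  have hfK (k : ℕ) : f k ∈ K := by
    cases k with
    | zero => rw [hf0]; exact (K.orthogonalProjectionOnto _).2
    | succ k => rw [hfrec]; exact (K.orthogonalProjectionOnto _).2
  have herr (k : ℕ) : h - f k = (errorOp hD K)^[k] (h - f 0) := by
    induction k with
    | zero => rfl
    | succ k ih =>
      rw [hfrec, sub_Tsingle_eq_errorOp hD K hK ((hmem h).2 hh) (hfK k), ih,
        Function.iterate_succ_apply']
  obtain ⟨u, hu, hlim⟩ := (isPositive_errorOp hD K).exists_tendsto_iterate_apply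
    (norm_errorOp_le_one hD K) (h - f 0)
  obtain ⟨huK, hχu⟩ := mem_and_chiMul_eq_zero_of_errorOp_apply_eq hD K hu
  have hu0 : u = 0 := ((hmem u).1 huK).eq_zero_of_ae_restrict_eq_zero hS isOpen_interior hDint
    (ae_restrict_of_ae_restrict_of_subset interior_subset
      (ae_restrict_eq_zero_of_chiMul_eq_zero hD hχu))
  have hf : Tendsto f atTop (nhds h) := by
    simpa [← herr, hu0] using (tendsto_const_nhds (x := h)).sub hlim
  exact hf.norm

/-- For `h ∈ B_S` and `D` a bounded measurable set with nonempty interior,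
the norms of the iterates `f_0 = P_S(χ_D h)`, `f_{k+1} = T_h^{(D)} f_k` converge to `‖h‖`. -/
theorem iterates_norm_tendsto_single (N : ℕ) (hN : 1 ≤ N)
    (S : Set (EuclideanSpace ℝ (Fin N))) (hS : IsCompact S)
    (K : Submodule ℂ (L2Space N))
    (hKset : (K : Set (L2Space N)) = {f : L2Space N | IsBandlimited S f})
    (hK : IsClosed (K : Set (L2Space N)))
    (h : L2Space N) (hh : IsBandlimited S h)
    (D : Set (EuclideanSpace ℝ (Fin N))) (hD : MeasurableSet D)
    (hDbdd : Bornology.IsBounded D) (hDint : (interior D).Nonempty)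
    (f : ℕ → L2Space N) (hf0 : f 0 = projOf K hK (chiMul hD h))
    (hfrec : ∀ k : ℕ, f (k + 1) = Tsingle K hK hD h (f k)) :
    Tendsto (fun k => ‖f k‖) atTop (nhds ‖h‖) :=
  iterates_norm_tendsto_single_general N S hS K hKset hK h hh D hD hDint f hf0 hfrec
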